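/- Let 𝔱𝔪₁ = {Ψ ∈ ℚ⟨⟨x₀,x₁⟩⟩ : ⟨Ψ | x₁⟩ = 0 and ⟨Ψ | x₀^l⟩ = 0 for all l ≥ 0}. For Ψ ∈ ℚ⟨⟨x₀,x₁⟩⟩, let d_Ψ be the continuous derivation of ℚ⟨⟨x₀,x₁⟩⟩ with d_Ψ(x₀) = 0 and d_Ψ(x₁) = Ψ. Then the bracket {Ψ₁, Ψ₂}₁ := d_{Ψ₁}(Ψ₂) − d_{Ψ₂}(Ψ₁) makes 𝔱𝔪₁ into a Lie algebra over ℚ (it is bilinear, alternating, and satisfies the Jacobi identity, and 𝔱𝔪₁ is closed under it). -/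
import Mathlib


/-- Words in the letters x₀, x₁ (0 ↦ x₀, 1 ↦ x₁). -/
abbrev W : Type := List (Fin 2)

/-- 𝔥^∨ = ℚ⟨⟨x₀,x₁⟩⟩, the completed free associative ℚ-algebra on x₀, x₁, realized
as the space of coefficient functions on words; `Φ w` is the coefficient ⟨Φ | w⟩. -/
abbrev NC : Type := W → ℚ

/-- The generator x₀ as a series. -/
def x0 : NC := fun w => if w = [(0 : Fin 2)] then 1 else 0

/-- The generator x₁ as a series. -/
def x1 : NC := fun w => if w = [(1 : Fin 2)] then 1 else 0

/-- The unit 1 of ℚ⟨⟨x₀,x₁⟩⟩. -/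
def nc1 : NC := fun w => if w = [] then 1 else 0

/-- The (concatenation) product of series: ⟨f·g | w⟩ = Σ_{w = uv} ⟨f|u⟩⟨g|v⟩. -/
def cmul (f g : NC) : NC := fun w =>
  ∑ i ∈ Finset.range (w.length + 1), f (w.take i) * g (w.drop i)

/-- Shuffle of two words, as a list of words with multiplicity. -/
def sh : W → W → List W
  | [], v => [v]
  | u, [] => [u]
  | a :: u, b :: v =>
      ((sh u (b :: v)).map (a :: ·)) ++ ((sh (a :: u) v).map (b :: ·))
termination_by u v => u.length + v.length

/-- ⟨Φ | u ⧢ v⟩, the pairing of Φ with the shuffle of the words u and v. -/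
def shPair (Φ : NC) (u v : W) : ℚ := ((sh u v).map Φ).sum

/-- Ψ is primitive for the shuffle coproduct: Δ_⧢(Ψ) = Ψ ⊗ 1 + 1 ⊗ Ψ, i.e.
the (u,v)-coefficient ⟨Ψ | u ⧢ v⟩ of Δ_⧢(Ψ) equals that of Ψ ⊗ 1 + 1 ⊗ Ψ. -/
def primitiveSh (Ψ : NC) : Prop :=
  ∀ u v : W,
    shPair Ψ u v = Ψ u * (if v = [] then 1 else 0) + (if u = [] then 1 else 0) * Ψ v

/-- d_Ψ(Φ), where d_Ψ is the continuous derivation of ℚ⟨⟨x₀,x₁⟩⟩ with d_Ψ(x₀) = 0 and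
d_Ψ(x₁) = Ψ: the coefficient at w sums, over all ways of writing w = u m v so that
u x₁ v is a word and m replaces that occurrence of x₁, the value ⟨Φ | u x₁ v⟩⟨Ψ | m⟩. -/
def der (Ψ Φ : NC) : NC := fun w =>
  ∑ a ∈ Finset.range (w.length + 1), ∑ b ∈ Finset.range (w.length + 1 - a),
    Φ (w.take a ++ (1 : Fin 2) :: w.drop (a + b)) * Ψ ((w.drop a).take b)

/-- The bracket {Ψ₁, Ψ₂}₁ = d_{Ψ₁}(Ψ₂) − d_{Ψ₂}(Ψ₁). -/
def br (Ψ₁ Ψ₂ : NC) : NC := der Ψ₁ Ψ₂ - der Ψ₂ Ψ₁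

/-- Membership in 𝔱𝔪₁: ⟨Ψ | x₁⟩ = 0 and ⟨Ψ | x₀^l⟩ = 0 for all l ≥ 0. -/
def tm1mem (Ψ : NC) : Prop :=
  Ψ [(1 : Fin 2)] = 0 ∧ ∀ l : ℕ, Ψ (List.replicate l (0 : Fin 2)) = 0

def sub (w : W) (a b : ℕ) : W := w.take a ++ (1 : Fin 2) :: w.drop (a + b)
def seg (w : W) (a b : ℕ) : W := (w.drop a).take b

lemma gtake {u l : W} {x : Fin 2} {c : ℕ} (h : u.length < c) :
    (u ++ x :: l).take c = u ++ x :: l.take (c - u.length - 1) := by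
  rw [List.take_append, List.take_of_length_le (le_of_lt h)]
  congr 1
  obtain ⟨k, hk⟩ : ∃ k, c - u.length = k + 1 := ⟨c - u.length - 1, by omega⟩
  rw [hk]
  simp [hk]

lemma gdrop {u l : W} {x : Fin 2} {c : ℕ} (h : u.length < c) :
    (u ++ x :: l).drop c = l.drop (c - u.length - 1) := by
  rw [List.drop_append, List.drop_eq_nil_of_le (le_of_lt h)]
  obtain ⟨k, hk⟩ : ∃ k, c - u.length = k + 1 := ⟨c - u.length - 1, by omega⟩
  rw [hk]
  simp [hk]

lemma gtake' {u l : W} {c : ℕ} (h : c ≤ u.length) : (u ++ l).take c = u.take c := by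
  rw [List.take_append]
  simp [Nat.sub_eq_zero_of_le h]

lemma gdrop' {u l : W} {c : ℕ} (h : c ≤ u.length) : (u ++ l).drop c = u.drop c ++ l := by
  rw [List.drop_append]
  simp [Nat.sub_eq_zero_of_le h]

lemma len_sub {w : W} {a b : ℕ} (h : a + b ≤ w.length) :
    (sub w a b).length = w.length + 1 - b := by
  simp [sub]; omega

lemma len_seg {w : W} {a b : ℕ} (h : a + b ≤ w.length) : (seg w a b).length = b := by
  simp [seg]; omega

section identities
variable {w : W} {a b c d : ℕ}

lemma len_take (h : a ≤ w.length) : (w.take a).length = a := by simp; omega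

-- Nested identities: c ≤ a < c + d, a + b ≤ n, c + d ≤ n + 1 - b
lemma N1 (hca : c ≤ a) (hab : a + b ≤ w.length) (hacd : a + 1 ≤ c + d) :
    sub (sub w a b) c d = sub w c (b + d - 1) := by
  have ha : a ≤ w.length := by omega
  rw [sub, sub, sub, gtake' (by rw [len_take ha]; omega : c ≤ (w.take a).length),
    List.take_take, min_eq_left hca,
    gdrop (by rw [len_take ha]; omega : (w.take a).length < c + d)]
  rw [len_take ha, List.drop_drop]
  have e1 : a + b + (c + d - a - 1) = c + (b + d - 1) := by omega
  rw [e1]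

lemma N2 (hca : c ≤ a) (hab : a + b ≤ w.length) (hacd : a + 1 ≤ c + d) :
    seg (sub w a b) c d = sub (seg w c (b + d - 1)) (a - c) b := by
  have ha : a ≤ w.length := by omega
  have h1 : ((w.drop c).take (a - c)).length = a - c := by simp; omega
  rw [seg, sub, gdrop' (by rw [len_take ha]; omega : c ≤ (w.take a).length),
    List.drop_take, gtake (by rw [h1]; omega), h1]
  rw [sub, seg, List.take_take, min_eq_left (by omega : a - c ≤ b + d - 1),
    List.drop_take, List.drop_drop]
  have e1 : b + d - 1 - (a - c + b) = d - (a - c) - 1 := by omega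
  have e2 : c + (a - c + b) = a + b := by omega
  rw [e1, e2]

lemma N3 (hca : c ≤ a) (hab : a + b ≤ w.length) (hacd : a + 1 ≤ c + d) :
    seg w a b = seg (seg w c (b + d - 1)) (a - c) b := by
  rw [seg, seg, seg, List.drop_take, List.drop_drop, List.take_take,
    min_eq_left (by omega : b ≤ b + d - 1 - (a - c))]
  have e1 : c + (a - c) = a := by omega
  rw [e1]

-- Disjoint identities
lemma D1 (hcd : c + d ≤ a) (hab : a + b ≤ w.length) :
    sub (sub w a b) c d = sub (sub w c d) (a + 1 - d) b := by
  have ha : a ≤ w.length := by omega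
  have hc : c ≤ w.length := by omega
  have h1 : (w.take c).length = c := len_take hc
  rw [sub, sub, sub, sub,
    gtake' (by rw [len_take ha]; omega : c ≤ (w.take a).length),
    List.take_take, min_eq_left (by omega : c ≤ a),
    gdrop' (by rw [len_take ha]; omega : c + d ≤ (w.take a).length),
    List.drop_take,
    gtake (by rw [h1]; omega : (w.take c).length < a + 1 - d),
    gdrop (by rw [h1]; omega : (w.take c).length < a + 1 - d + b),
    List.drop_drop, h1]
  simp only [List.cons_append, List.append_assoc]
  have e1 : a + 1 - d - c - 1 = a - (c + d) := by omega
  have e2 : c + d + (a + 1 - d + b - c - 1) = a + b := by omega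
  rw [e1, e2]

lemma D2 (hcd : c + d ≤ a) (ha : a ≤ w.length) (b : ℕ) :
    seg (sub w a b) c d = seg w c d := by
  have h1 : ((w.drop c).take (a - c)).length = a - c := by simp; omega
  rw [seg, sub, gdrop' (by rw [len_take ha]; omega : c ≤ (w.take a).length),
    List.drop_take, gtake' (by rw [h1]; omega : d ≤ ((w.drop c).take (a - c)).length),
    List.take_take, min_eq_left (by omega : d ≤ a - c), seg]
lemma D3 (hac : a + 1 ≤ c) (hab : a + b ≤ w.length) (d : ℕ) :
    seg (sub w a b) c d = seg w (c + b - 1) d := by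
  rw [seg, sub, gdrop (by rw [len_take (by omega)]; omega : (w.take a).length < c),
    len_take (by omega : a ≤ w.length), List.drop_drop, seg]
  congr 2
  omega
end identities

lemma D1' (hac : a + 1 ≤ c) (hab : a + b ≤ w.length) (hcd : c + d ≤ w.length + 1 - b) :
    sub (sub w a b) c d = sub (sub w (c + b - 1) d) a b := by
  have h := D1 (w := w) (a := c + b - 1) (b := d) (c := a) (d := b)
    (by omega) (by omega)
  have e1 : c + b - 1 + 1 - b = c := by omega
  rw [e1] at h
  exact h.symm

def T (n : ℕ) : Finset (ℕ × ℕ) :=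
  (Finset.range (n + 1) ×ˢ Finset.range (n + 1)).filter (fun p => p.1 + p.2 ≤ n)

lemma mem_T {n : ℕ} {p : ℕ × ℕ} : p ∈ T n ↔ p.1 + p.2 ≤ n := by
  simp [T]; omega

lemma der_eq (Ψ Φ : NC) (w : W) :
    der Ψ Φ w = ∑ p ∈ T w.length, Φ (sub w p.1 p.2) * Ψ (seg w p.1 p.2) := by
  rw [T, Finset.sum_filter, Finset.sum_product]
  refine Finset.sum_congr rfl fun a ha => ?_
  rw [← Finset.sum_filter]
  refine Finset.sum_congr ?_ fun b _ => rfl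
  ext b
  simp at ha ⊢
  omega

abbrev Idx (n : ℕ) : Finset ((_ : ℕ × ℕ) × ℕ × ℕ) :=
  (T n).sigma (fun p => T (n + 1 - p.2))

abbrev Idx2 (n : ℕ) : Finset ((_ : ℕ × ℕ) × ℕ × ℕ) :=
  (T n).sigma (fun r => T r.2)

noncomputable def term (Ψ₁ Ψ₂ Φ : NC) (w : W) (x : (_ : ℕ × ℕ) × ℕ × ℕ) : ℚ :=
  Φ (sub (sub w x.1.1 x.1.2) x.2.1 x.2.2) * Ψ₂ (seg (sub w x.1.1 x.1.2) x.2.1 x.2.2)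
    * Ψ₁ (seg w x.1.1 x.1.2)

lemma sumA (Ψ₁ Ψ₂ Φ : NC) (w : W) :
    der Ψ₁ (der Ψ₂ Φ) w = ∑ x ∈ Idx w.length, term Ψ₁ Ψ₂ Φ w x := by
  rw [der_eq, Finset.sum_sigma]
  refine Finset.sum_congr rfl fun p hp => ?_
  rw [der_eq, len_sub (mem_T.1 hp), Finset.sum_mul]
  exact Finset.sum_congr rfl fun s _ => rfl

def nested (x : (_ : ℕ × ℕ) × ℕ × ℕ) : Prop :=
  x.2.1 ≤ x.1.1 ∧ x.1.1 < x.2.1 + x.2.2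

instance : DecidablePred nested := fun x => by unfold nested; infer_instance

lemma sumB (Ψ₁ Ψ₂ Φ : NC) (w : W) :
    ∑ x ∈ (Idx w.length).filter nested, term Ψ₁ Ψ₂ Φ w x
      = der (der Ψ₁ Ψ₂) Φ w := by
  have hrhs : der (der Ψ₁ Ψ₂) Φ w = ∑ y ∈ Idx2 w.length,
      Φ (sub w y.1.1 y.1.2) * Ψ₂ (sub (seg w y.1.1 y.1.2) y.2.1 y.2.2)
        * Ψ₁ (seg (seg w y.1.1 y.1.2) y.2.1 y.2.2) := by
    rw [der_eq, Finset.sum_sigma]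
    refine Finset.sum_congr rfl fun r hr => ?_
    rw [der_eq, len_seg (mem_T.1 hr), Finset.mul_sum]
    refine Finset.sum_congr rfl fun s _ => by ring
  rw [hrhs]
  refine Finset.sum_nbij'
    (fun x => ⟨(x.2.1, x.1.2 + x.2.2 - 1), (x.1.1 - x.2.1, x.1.2)⟩)
    (fun y => ⟨(y.1.1 + y.2.1, y.2.2), (y.1.1, y.1.2 + 1 - y.2.2)⟩)
    ?_ ?_ ?_ ?_ ?_
  · rintro ⟨⟨a, b⟩, c, d⟩ hx
    simp only [Finset.mem_filter, Finset.mem_sigma, mem_T, nested] at hx ⊢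
    omega
  · rintro ⟨⟨c, e⟩, a', b'⟩ hy
    simp only [Finset.mem_filter, Finset.mem_sigma, mem_T, nested] at hy ⊢
    omega
  · rintro ⟨⟨a, b⟩, c, d⟩ hx
    simp only [Finset.mem_filter, Finset.mem_sigma, mem_T, nested] at hx
    simp only [Sigma.mk.inj_iff, Prod.mk.injEq, heq_eq_eq, true_and, and_true]
    omega
  · rintro ⟨⟨c, e⟩, a', b'⟩ hy
    simp only [Finset.mem_sigma, mem_T] at hy
    simp only [Sigma.mk.inj_iff, Prod.mk.injEq, heq_eq_eq, true_and, and_true]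
    omega
  · rintro ⟨⟨a, b⟩, c, d⟩ hx
    simp only [Finset.mem_filter, Finset.mem_sigma, mem_T, nested] at hx
    obtain ⟨⟨h1, h2⟩, h3, h4⟩ := hx
    rw [term]
    simp only []
    rw [N1 h3 h1 h4, N2 h3 h1 h4, N3 h3 h1 h4]

def iota (x : (_ : ℕ × ℕ) × ℕ × ℕ) : (_ : ℕ × ℕ) × ℕ × ℕ :=
  if x.1.1 < x.2.1 then ⟨(x.2.1 + x.1.2 - 1, x.2.2), (x.1.1, x.1.2)⟩
  else ⟨(x.2.1, x.2.2), (x.1.1 + 1 - x.2.2, x.1.2)⟩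

lemma sumC (Ψ₁ Ψ₂ Φ : NC) (w : W) :
    ∑ x ∈ (Idx w.length).filter (fun x => ¬ nested x), term Ψ₁ Ψ₂ Φ w x
      = ∑ x ∈ (Idx w.length).filter (fun x => ¬ nested x), term Ψ₂ Ψ₁ Φ w x := by
  have hmem : ∀ x ∈ (Idx w.length).filter (fun x => ¬ nested x),
      iota x ∈ (Idx w.length).filter (fun x => ¬ nested x) := by
    rintro ⟨⟨a, b⟩, c, d⟩ hx
    simp only [Finset.mem_filter, Finset.mem_sigma, mem_T, nested, not_and, not_lt] at hx
    rw [iota]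
    by_cases h : a < c
    · rw [if_pos h]
      simp only [Finset.mem_filter, Finset.mem_sigma, mem_T, nested, not_and, not_lt]
      omega
    · rw [if_neg h]
      simp only [Finset.mem_filter, Finset.mem_sigma, mem_T, nested, not_and, not_lt]
      omega
  have hinv : ∀ x ∈ (Idx w.length).filter (fun x => ¬ nested x), iota (iota x) = x := by
    rintro ⟨⟨a, b⟩, c, d⟩ hx
    simp only [Finset.mem_filter, Finset.mem_sigma, mem_T, nested, not_and, not_lt] at hx
    by_cases h : a < c
    · have e1 : iota ⟨(a, b), (c, d)⟩ = ⟨(c + b - 1, d), (a, b)⟩ := by rw [iota, if_pos h]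
      rw [e1, iota, if_neg (show ¬ (c + b - 1 < a) by omega)]
      simp only [Sigma.mk.inj_iff, Prod.mk.injEq, heq_eq_eq, true_and, and_true]
      omega
    · have e1 : iota ⟨(a, b), (c, d)⟩ = ⟨(c, d), (a + 1 - d, b)⟩ := by rw [iota, if_neg h]
      rw [e1, iota, if_pos (show c < a + 1 - d by omega)]
      simp only [Sigma.mk.inj_iff, Prod.mk.injEq, heq_eq_eq, true_and, and_true]
      omega
  refine Finset.sum_nbij' iota iota hmem hmem hinv hinv ?_
  rintro ⟨⟨a, b⟩, c, d⟩ hx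
  simp only [Finset.mem_filter, Finset.mem_sigma, mem_T, nested, not_and, not_lt] at hx
  obtain ⟨⟨h1, h2⟩, h3⟩ := hx
  rw [iota]
  by_cases h : a < c
  · rw [if_pos h, term, term]
    simp only []
    rw [D1' h h1 h2, D3 h h1 d, D2 (by omega : a + b ≤ c + b - 1) (by omega) d]
    ring
  · have hcd : c + d ≤ a := h3 (by omega)
    rw [if_neg h, term, term]
    simp only []
    rw [D1 hcd h1, D2 hcd (by omega) b, D3 (by omega : c + 1 ≤ a + 1 - d) (by omega) b]
    have e1 : a + 1 - d + d - 1 = a := by omega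
    rw [e1]
    ring

lemma keyK (Ψ₁ Ψ₂ Φ : NC) (w : W) :
    der Ψ₁ (der Ψ₂ Φ) w - der Ψ₂ (der Ψ₁ Φ) w
      = der (der Ψ₁ Ψ₂) Φ w - der (der Ψ₂ Ψ₁) Φ w := by
  rw [sumA, sumA, ← Finset.sum_filter_add_sum_filter_not (Idx w.length) nested (term Ψ₁ Ψ₂ Φ w),
    ← Finset.sum_filter_add_sum_filter_not (Idx w.length) nested (term Ψ₂ Ψ₁ Φ w),
    sumB, sumB, sumC Ψ₁ Ψ₂ Φ w]
  ring

lemma der_add_left (Ψ Ψ' Φ : NC) : der (Ψ + Ψ') Φ = der Ψ Φ + der Ψ' Φ := by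
  funext w
  simp [der, mul_add, Finset.sum_add_distrib]

lemma der_add_right (Ψ Φ Φ' : NC) : der Ψ (Φ + Φ') = der Ψ Φ + der Ψ Φ' := by
  funext w
  simp [der, add_mul, Finset.sum_add_distrib]

lemma der_sub_left (Ψ Ψ' Φ : NC) : der (Ψ - Ψ') Φ = der Ψ Φ - der Ψ' Φ := by
  funext w
  simp [der, mul_sub, Finset.sum_sub_distrib]

lemma der_sub_right (Ψ Φ Φ' : NC) : der Ψ (Φ - Φ') = der Ψ Φ - der Ψ Φ' := by
  funext w
  simp [der, sub_mul, Finset.sum_sub_distrib]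

lemma der_smul_left (c : ℚ) (Ψ Φ : NC) : der (c • Ψ) Φ = c • der Ψ Φ := by
  funext w
  simp [der, Finset.mul_sum, mul_assoc, mul_left_comm]

lemma der_smul_right (c : ℚ) (Ψ Φ : NC) : der Ψ (c • Φ) = c • der Ψ Φ := by
  funext w
  simp [der, Finset.mul_sum, mul_assoc, mul_left_comm]

lemma der_x1 (Ψ Φ : NC) (hΨ : tm1mem Ψ) : der Ψ Φ [(1 : Fin 2)] = 0 := by
  have h0 : Ψ [] = 0 := hΨ.2 0
  have h1 : Ψ [(1 : Fin 2)] = 0 := hΨ.1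
  simp [der, Finset.sum_range_succ, h0, h1]

lemma der_x0pow (Ψ Φ : NC) (hΨ : tm1mem Ψ) (l : ℕ) :
    der Ψ Φ (List.replicate l (0 : Fin 2)) = 0 := by
  rw [der]
  refine Finset.sum_eq_zero fun a _ => Finset.sum_eq_zero fun b _ => ?_
  simp only [List.drop_replicate, List.take_replicate]
  rw [hΨ.2, mul_zero]

lemma br_expand (A B C : NC) (w : W) :
    br (br A B) C w
      = (der A (der B C) w - der B (der A C) w) - der C (der A B) w + der C (der B A) w := by
  show (der (der A B - der B A) C - der C (der A B - der B A)) w = _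
  rw [der_sub_left, der_sub_right]
  simp only [Pi.sub_apply]
  rw [← keyK]
  ring

/-- (𝔱𝔪₁, {−,−}₁) is a Lie algebra over ℚ: the bracket is bilinear, alternating,
satisfies the Jacobi identity, and 𝔱𝔪₁ is closed under it. -/
theorem tm1_lie_algebra :
    (∀ Ψ₁ Ψ₂ : NC, tm1mem Ψ₁ → tm1mem Ψ₂ → tm1mem (br Ψ₁ Ψ₂)) ∧
    (∀ Ψ₁ Ψ₂ Ψ₃ : NC, tm1mem Ψ₁ → tm1mem Ψ₂ → tm1mem Ψ₃ →
      br (Ψ₁ + Ψ₂) Ψ₃ = br Ψ₁ Ψ₃ + br Ψ₂ Ψ₃) ∧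
    (∀ Ψ₁ Ψ₂ Ψ₃ : NC, tm1mem Ψ₁ → tm1mem Ψ₂ → tm1mem Ψ₃ →
      br Ψ₁ (Ψ₂ + Ψ₃) = br Ψ₁ Ψ₂ + br Ψ₁ Ψ₃) ∧
    (∀ (c : ℚ) (Ψ₁ Ψ₂ : NC), tm1mem Ψ₁ → tm1mem Ψ₂ →
      br (c • Ψ₁) Ψ₂ = c • br Ψ₁ Ψ₂) ∧
    (∀ (c : ℚ) (Ψ₁ Ψ₂ : NC), tm1mem Ψ₁ → tm1mem Ψ₂ →
      br Ψ₁ (c • Ψ₂) = c • br Ψ₁ Ψ₂) ∧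
    (∀ Ψ : NC, tm1mem Ψ → br Ψ Ψ = 0) ∧
    (∀ Ψ₁ Ψ₂ Ψ₃ : NC, tm1mem Ψ₁ → tm1mem Ψ₂ → tm1mem Ψ₃ →
      br (br Ψ₁ Ψ₂) Ψ₃ + br (br Ψ₂ Ψ₃) Ψ₁ + br (br Ψ₃ Ψ₁) Ψ₂ = 0) := by
  refine ⟨?_, ?_, ?_, ?_, ?_, ?_, ?_⟩
  · -- closure
    intro Ψ₁ Ψ₂ h₁ h₂
    constructor
    · show (der Ψ₁ Ψ₂ - der Ψ₂ Ψ₁) [(1 : Fin 2)] = 0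
      simp only [Pi.sub_apply]
      rw [der_x1 Ψ₁ Ψ₂ h₁, der_x1 Ψ₂ Ψ₁ h₂, sub_zero]
    · intro l
      show (der Ψ₁ Ψ₂ - der Ψ₂ Ψ₁) (List.replicate l (0 : Fin 2)) = 0
      simp only [Pi.sub_apply]
      rw [der_x0pow Ψ₁ Ψ₂ h₁ l, der_x0pow Ψ₂ Ψ₁ h₂ l, sub_zero]
  · intro Ψ₁ Ψ₂ Ψ₃ _ _ _
    rw [br, br, br, der_add_left, der_add_right]
    funext w
    simp only [Pi.sub_apply, Pi.add_apply]
    ring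
  · intro Ψ₁ Ψ₂ Ψ₃ _ _ _
    rw [br, br, br, der_add_left, der_add_right]
    funext w
    simp only [Pi.sub_apply, Pi.add_apply]
    ring
  · intro c Ψ₁ Ψ₂ _ _
    rw [br, br, der_smul_left, der_smul_right]
    funext w
    simp only [Pi.sub_apply, Pi.smul_apply, smul_eq_mul]
    ring
  · intro c Ψ₁ Ψ₂ _ _
    rw [br, br, der_smul_left, der_smul_right]
    funext w
    simp only [Pi.sub_apply, Pi.smul_apply, smul_eq_mul]
    ring
  · intro Ψ _
    rw [br, sub_self]
  · intro Ψ₁ Ψ₂ Ψ₃ _ _ _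
    funext w
    simp only [Pi.add_apply, Pi.zero_apply]
    rw [br_expand Ψ₁ Ψ₂ Ψ₃, br_expand Ψ₂ Ψ₃ Ψ₁, br_expand Ψ₃ Ψ₁ Ψ₂]
    ring
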